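/- Let 0 ≤ p ≤ 1 and equip the space {left, right}^ℕ of infinite branch sequences with the product probability measure in which each coordinate independently equals 'right' with probability p and 'left' with probability 1 − p. For an infinite branch sequence w define integers g_0 = g_1 = 1 and, for every i ≥ 1, g_{i+1} = g_{i−1} + g_i if w(i) = right and g_{i+1} = |g_{i−1} − g_i| if w(i) = left. Then the measure of the set of w such that (g_i, g_{i+1}) ≠ (1,1) for all i ≥ 1 equals 0 if p ≤ 1/3, and equals (3p − 2 + √(4p − 3p²))/2 if p > 1/3. -/

import Mathlib

open MeasureTheory

/-- The walk values `g_i` determined by an infinite branch sequence `w`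
(`true` means a right branch): `g_0 = g_1 = 1` and for `i ≥ 1`,
`g_{i+1} = g_{i-1} + g_i` if `w i = right` and `g_{i+1} = |g_{i-1} - g_i|`
if `w i = left`.  The value `w 0` is irrelevant. -/
def fibG (w : ℕ → Bool) : ℕ → ℤ
  | 0 => 1
  | 1 => 1
  | i + 2 =>
      if w (i + 1) then fibG w i + fibG w (i + 1)
      else |fibG w i - fibG w (i + 1)|

namespace AO

open Filter

/-- survival probability of `n` steps of the walk (+2 w.p. `p`, −1 w.p. `1−p`)
started at level `k`, where level `0` is death (checked at every time incl. start). -/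
def SP (p : ℝ) : ℕ → ℕ → ℝ
  | 0, _ => 0
  | _+1, 0 => 1
  | k+1, n+1 => p * SP p (k+3) n + (1-p) * SP p k n

@[simp] lemma SP_zero (p : ℝ) (n : ℕ) : SP p 0 n = 0 := by cases n <;> rfl
@[simp] lemma SP_succ_zero (p : ℝ) (k : ℕ) : SP p (k+1) 0 = 1 := rfl
lemma SP_succ_succ (p : ℝ) (k n : ℕ) :
    SP p (k+1) (n+1) = p * SP p (k+3) n + (1-p) * SP p k n := rfl

variable {p : ℝ}

lemma SP_nonneg (hp0 : 0 ≤ p) (hp1 : p ≤ 1) : ∀ n k, 0 ≤ SP p k n := by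
  intro n
  induction n with
  | zero => intro k; cases k with
    | zero => simp
    | succ k => simp
  | succ n ih =>
    intro k; cases k with
    | zero => simp
    | succ k =>
      rw [SP_succ_succ]
      exact add_nonneg (mul_nonneg hp0 (ih _)) (mul_nonneg (by linarith) (ih _))
lemma SP_le_one (hp0 : 0 ≤ p) (hp1 : p ≤ 1) : ∀ n k, SP p k n ≤ 1 := by
  intro n
  induction n with
  | zero => intro k; cases k with
    | zero => simp
    | succ k => simp
  | succ n ih =>
    intro k; cases k with
    | zero => simp
    | succ k =>
      rw [SP_succ_succ]
      calc p * SP p (k+3) n + (1-p) * SP p k n ≤ p * 1 + (1-p) * 1 := by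
            nlinarith [mul_nonneg hp0 (sub_nonneg.2 (ih (k+3))), mul_nonneg (sub_nonneg.2 hp1) (sub_nonneg.2 (ih k))]
        _ = 1 := by ring
lemma SP_antitone (hp0 : 0 ≤ p) (hp1 : p ≤ 1) : ∀ n k, SP p k (n+1) ≤ SP p k n := by
  intro n
  induction n with
  | zero => intro k; cases k with
    | zero => simp
    | succ k =>
      rw [SP_succ_succ, SP_succ_zero]
      calc p * SP p (k+3) 0 + (1-p) * SP p k 0 ≤ p * 1 + (1-p) * 1 := by
            nlinarith [mul_nonneg hp0 (sub_nonneg.2 (SP_le_one hp0 hp1 0 (k+3))), mul_nonneg (sub_nonneg.2 hp1) (sub_nonneg.2 (SP_le_one hp0 hp1 0 k))]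
        _ = 1 := by ring
  | succ n ih =>
    intro k; cases k with
    | zero => simp
    | succ k =>
      rw [SP_succ_succ p k (n+1), SP_succ_succ p k n]
      have h1 := ih (k+3); have h2 := ih k
      nlinarith

lemma SP_anti (hp0 : 0 ≤ p) (hp1 : p ≤ 1) (k : ℕ) : Antitone (fun n => SP p k n) :=
  antitone_nat_of_succ_le fun n => SP_antitone hp0 hp1 n k

/-- death (hitting) probability within `n` steps -/
def G (p : ℝ) (k n : ℕ) : ℝ := 1 - SP p k n

@[simp] lemma G_zero (p : ℝ) (n : ℕ) : G p 0 n = 1 := by simp [G]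
@[simp] lemma G_succ_zero (p : ℝ) (k : ℕ) : G p (k+1) 0 = 0 := by simp [G]
lemma G_succ_succ (p : ℝ) (hp0 : 0 ≤ p) (hp1 : p ≤ 1) (k n : ℕ) :
    G p (k+1) (n+1) = p * G p (k+3) n + (1-p) * G p k n := by
  simp only [G, SP_succ_succ]; ring

lemma G_nonneg (hp0 : 0 ≤ p) (hp1 : p ≤ 1) (k n : ℕ) : 0 ≤ G p k n := by
  have := SP_le_one hp0 hp1 n k; simp [G]; linarith
lemma G_le_one (hp0 : 0 ≤ p) (hp1 : p ≤ 1) (k n : ℕ) : G p k n ≤ 1 := by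
  have := SP_nonneg hp0 hp1 n k; simp [G]; linarith
lemma G_mono (hp0 : 0 ≤ p) (hp1 : p ≤ 1) (k n : ℕ) : G p k n ≤ G p k (n+1) := by
  have := SP_antitone hp0 hp1 n k; simp [G]; linarith

lemma G_mul_le (hp0 : 0 ≤ p) (hp1 : p ≤ 1) :
    ∀ n k j, G p (k+j) n ≤ G p k n * G p j n := by
  intro n
  induction n with
  | zero =>
    intro k j
    cases k with
    | zero => cases j with
      | zero => simp
      | succ j => simp
    | succ k => rw [show k+1+j = (k+j)+1 by ring, G_succ_zero]
                exact mul_nonneg (G_nonneg hp0 hp1 _ _) (G_nonneg hp0 hp1 _ _)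
  | succ n ih =>
    intro k j
    cases k with
    | zero => simp
    | succ k => cases j with
      | zero => simp
      | succ j =>
        have h1 : G p (k+1+(j+1)) (n+1) = p * G p (k+1+(j+3)) n + (1-p) * G p (k+1+j) n := by
          rw [show k+1+(j+1) = (k+j+1)+1 by ring, G_succ_succ p hp0 hp1,
            show k+j+1+3 = k+1+(j+3) by ring, show k+j+1 = k+1+j by ring]
        rw [h1]
        have h2 := ih (k+1) (j+3)
        have h3 := ih (k+1) j
        have huseful : p * G p (k+1+(j+3)) n + (1-p) * G p (k+1+j) n
            ≤ G p (k+1) n * (p * G p (j+3) n + (1-p) * G p j n) := by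
          have hg := G_nonneg hp0 hp1 (k+1) n
          nlinarith [G_nonneg hp0 hp1 (j+3) n, G_nonneg hp0 hp1 j n]
        calc p * G p (k+1+(j+3)) n + (1-p) * G p (k+1+j) n
            ≤ G p (k+1) n * (p * G p (j+3) n + (1-p) * G p j n) := huseful
          _ = G p (k+1) n * G p (j+1) (n+1) := by rw [G_succ_succ p hp0 hp1]
          _ ≤ G p (k+1) (n+1) * G p (j+1) (n+1) := by
              have := G_mono hp0 hp1 (k+1) n
              have h0 : 0 ≤ G p (j+1) (n+1) := G_nonneg hp0 hp1 _ _
              nlinarith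

lemma le_G_add (hp0 : 0 ≤ p) (hp1 : p ≤ 1) :
    ∀ n m k j, G p k n * G p j m ≤ G p (k+j) (n+m) := by
  intro n
  induction n with
  | zero =>
    intro m k j
    cases k with
    | zero => simp
    | succ k =>
      rw [G_succ_zero]
      simpa using G_nonneg hp0 hp1 (k+1+j) m
  | succ n ih =>
    intro m k j
    cases k with
    | zero =>
      simp only [G_zero, one_mul, Nat.zero_add]
      have hmono : G p j m ≤ G p j (n + 1 + m) := by
        have : Antitone (fun t => SP p j t) := SP_anti hp0 hp1 j
        have := this (show m ≤ n+1+m by omega)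
        simp [G]; linarith
      exact hmono
    | succ k =>
      rw [G_succ_succ p hp0 hp1]
      have h1 := ih m (k+3) j
      have h2 := ih m k j
      have hstep : G p (k+1+j) (n+1+m) = p * G p (k+3+j) (n+m) + (1-p) * G p (k+j) (n+m) := by
        rw [show k+1+j = (k+j)+1 by ring, show n+1+m = (n+m)+1 by ring, G_succ_succ p hp0 hp1,
          show k+j+3 = k+3+j by ring]
      rw [hstep]
      have h0 : 0 ≤ G p j m := G_nonneg hp0 hp1 _ _
      nlinarith


/-- limiting survival probability -/
noncomputable def SPL (p : ℝ) (k : ℕ) : ℝ := ⨅ n, SP p k n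
/-- limiting death probability -/
noncomputable def AL (p : ℝ) (k : ℕ) : ℝ := 1 - SPL p k

lemma SP_tendsto (hp0 : 0 ≤ p) (hp1 : p ≤ 1) (k : ℕ) :
    Tendsto (fun n => SP p k n) atTop (nhds (SPL p k)) := by
  apply tendsto_atTop_ciInf (SP_anti hp0 hp1 k)
  exact ⟨0, fun x ⟨n, hn⟩ => hn ▸ SP_nonneg hp0 hp1 n k⟩

lemma G_tendsto (hp0 : 0 ≤ p) (hp1 : p ≤ 1) (k : ℕ) :
    Tendsto (fun n => G p k n) atTop (nhds (AL p k)) := by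
  simpa [G, AL] using (tendsto_const_nhds (x := (1:ℝ))).sub (SP_tendsto hp0 hp1 k)

lemma SPL_zero (hp0 : 0 ≤ p) (hp1 : p ≤ 1) : SPL p 0 = 0 := by
  have h2 : Tendsto (fun _ : ℕ => (0:ℝ)) atTop (nhds 0) := tendsto_const_nhds
  have h1 : Tendsto (fun n => SP p 0 n) atTop (nhds 0) := by simpa using h2
  exact tendsto_nhds_unique (SP_tendsto hp0 hp1 0) h1

lemma AL_nonneg (hp0 : 0 ≤ p) (hp1 : p ≤ 1) (k : ℕ) : 0 ≤ AL p k :=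
  le_of_tendsto_of_tendsto' tendsto_const_nhds (G_tendsto hp0 hp1 k)
    (fun n => G_nonneg hp0 hp1 k n)
lemma AL_le_one (hp0 : 0 ≤ p) (hp1 : p ≤ 1) (k : ℕ) : AL p k ≤ 1 :=
  le_of_tendsto_of_tendsto' (G_tendsto hp0 hp1 k) tendsto_const_nhds
    (fun n => G_le_one hp0 hp1 k n)

lemma AL_mul (hp0 : 0 ≤ p) (hp1 : p ≤ 1) (k j : ℕ) : AL p (k+j) = AL p k * AL p j := by
  have hle : AL p (k+j) ≤ AL p k * AL p j :=
    le_of_tendsto_of_tendsto' (G_tendsto hp0 hp1 (k+j))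
      ((G_tendsto hp0 hp1 k).mul (G_tendsto hp0 hp1 j))
      (fun n => G_mul_le hp0 hp1 n k j)
  have hge : AL p k * AL p j ≤ AL p (k+j) := by
    have hsub : Tendsto (fun n : ℕ => G p (k+j) (n+n)) atTop (nhds (AL p (k+j))) :=
      (G_tendsto hp0 hp1 (k+j)).comp
        (tendsto_atTop_mono (fun n => Nat.le_add_left n n) tendsto_id)
    exact le_of_tendsto_of_tendsto'
      ((G_tendsto hp0 hp1 k).mul (G_tendsto hp0 hp1 j)) hsub
      (fun n => le_G_add hp0 hp1 n n k j)
  linarith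

lemma AL_zero' (hp0 : 0 ≤ p) (hp1 : p ≤ 1) : AL p 0 = 1 := by
  simp [AL, SPL_zero hp0 hp1]

lemma AL_pow (hp0 : 0 ≤ p) (hp1 : p ≤ 1) (k : ℕ) : AL p k = (AL p 1)^k := by
  induction k with
  | zero => simpa using AL_zero' hp0 hp1
  | succ k ih => rw [pow_succ, ← ih, show k+1 = k+1 from rfl, AL_mul hp0 hp1 k 1]

lemma AL_cubic (hp0 : 0 ≤ p) (hp1 : p ≤ 1) :
    1 - AL p 1 = p * (1 - (AL p 1)^3) := by
  have h1 : Tendsto (fun n => SP p 1 (n+1)) atTop (nhds (SPL p 1)) :=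
    (SP_tendsto hp0 hp1 1).comp (tendsto_add_atTop_nat 1)
  have h2 : Tendsto (fun n => SP p 1 (n+1)) atTop (nhds (p * SPL p 3 + (1-p) * SPL p 0)) := by
    simp only [SP_succ_succ]
    exact ((tendsto_const_nhds.mul (SP_tendsto hp0 hp1 3)).add
      (tendsto_const_nhds.mul (SP_tendsto hp0 hp1 0)))
  have h3 := tendsto_nhds_unique h1 h2
  have h4 : SPL p 3 = 1 - (AL p 1)^3 := by
    have h := AL_pow hp0 hp1 3
    simp only [AL] at h ⊢; linarith
  rw [SPL_zero hp0 hp1] at h3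
  have h5 : SPL p 1 = 1 - AL p 1 := by simp only [AL]; ring
  rw [h5, h4] at h3; linarith

lemma AL_one_of_le (hp0 : 0 ≤ p) (hp1 : p ≤ 1) (hp3 : p ≤ 1/3) : AL p 1 = 1 := by
  set a := AL p 1 with ha
  have h0 : 0 ≤ a := AL_nonneg hp0 hp1 1
  have h1 : a ≤ 1 := AL_le_one hp0 hp1 1
  have hc := AL_cubic hp0 hp1
  by_contra hne
  have hlt : a < 1 := lt_of_le_of_ne h1 hne
  -- 1 - a = p (1-a)(1+a+a²) ⇒ 1 = p(1+a+a²) < 3p·... contradiction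
  have hfac : (1-a) * (1 - p * (1 + a + a^2)) = 0 := by ring_nf; ring_nf at hc; linarith
  have h2 : 1 - p * (1 + a + a^2) = 0 := by
    rcases mul_eq_zero.1 hfac with h | h
    · linarith
    · exact h
  nlinarith


lemma sqrtD_sq (hp0 : 0 ≤ p) (hp1 : p ≤ 1) :
    Real.sqrt (4*p - 3*p^2) ^ 2 = 4*p - 3*p^2 :=
  Real.sq_sqrt (by nlinarith)

lemma sqrtD_nonneg (p : ℝ) : 0 ≤ Real.sqrt (4*p - 3*p^2) := Real.sqrt_nonneg _

lemma sqrtD_lt (hp1 : p ≤ 1) (hp3 : 1/3 < p) : Real.sqrt (4*p - 3*p^2) < 3*p := by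
  have h := sqrtD_sq (by linarith) hp1
  nlinarith [sqrtD_nonneg p]

lemma sqrtD_ge (hp0 : 0 ≤ p) (hp1 : p ≤ 1) : p ≤ Real.sqrt (4*p - 3*p^2) := by
  have h := sqrtD_sq hp0 hp1
  nlinarith [sqrtD_nonneg p]

/-- the nontrivial root of `a = (1-p) + p a³` -/
noncomputable def abar (p : ℝ) : ℝ := (Real.sqrt (4*p - 3*p^2) - p) / (2*p)

lemma abar_nonneg (hp1 : p ≤ 1) (hp3 : 1/3 < p) : 0 ≤ abar p := by
  have := sqrtD_ge (by linarith : (0:ℝ) ≤ p) hp1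
  apply div_nonneg (by linarith) (by linarith)

lemma abar_lt_one (hp1 : p ≤ 1) (hp3 : 1/3 < p) : abar p < 1 := by
  have h := sqrtD_lt hp1 hp3
  rw [abar, div_lt_one (by linarith)]
  linarith

lemma abar_quad (hp1 : p ≤ 1) (hp3 : 1/3 < p) :
    p * abar p + p * (abar p)^2 = 1 - p := by
  have hp : (0:ℝ) < p := by linarith
  have h := sqrtD_sq hp.le hp1
  rw [abar]
  field_simp
  nlinarith [sqrtD_nonneg p, Real.sq_sqrt (show (0:ℝ) ≤ p * (4 - p * 3) by nlinarith), Real.sqrt_nonneg (p * (4 - p * 3))]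

lemma abar_cubic (hp1 : p ≤ 1) (hp3 : 1/3 < p) :
    (1 - p) + p * (abar p)^3 = abar p := by
  have h := abar_quad hp1 hp3
  have h1 : abar p < 1 := abar_lt_one hp1 hp3
  nlinarith [abar_nonneg hp1 hp3]

lemma G_one_le_abar (hp1 : p ≤ 1) (hp3 : 1/3 < p) (n : ℕ) : G p 1 n ≤ abar p := by
  have hp0 : (0:ℝ) ≤ p := by linarith
  induction n with
  | zero => simpa using abar_nonneg hp1 hp3
  | succ n ih =>
    have h1 : G p 1 (n+1) = p * G p 3 n + (1-p) * G p 0 n := G_succ_succ p hp0 hp1 0 n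
    rw [h1, G_zero]
    have h2 : G p 3 n ≤ (G p 1 n)^3 := by
      have ha := G_mul_le hp0 hp1 n 1 2
      have hb := G_mul_le hp0 hp1 n 1 1
      have hg1 := G_nonneg hp0 hp1 1 n
      nlinarith
    have h3 : (G p 1 n)^3 ≤ (abar p)^3 := by
      have := G_nonneg hp0 hp1 1 n
      gcongr
    have := abar_cubic hp1 hp3
    nlinarith

lemma AL_eq_abar (hp1 : p ≤ 1) (hp3 : 1/3 < p) : AL p 1 = abar p := by
  have hp0 : (0:ℝ) ≤ p := by linarith
  set a := AL p 1 with ha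
  have hub : a ≤ abar p :=
    le_of_tendsto_of_tendsto' (G_tendsto hp0 hp1 1) tendsto_const_nhds
      (fun n => G_one_le_abar hp1 hp3 n)
  have h0 : 0 ≤ a := AL_nonneg hp0 hp1 1
  have hc := AL_cubic hp0 hp1
  have hlt : a < 1 := lt_of_le_of_lt hub (abar_lt_one hp1 hp3)
  -- 1 = p(1+a+a²)
  have h2 : p * (1 + a + a^2) = 1 := by
    have hfac : (1-a) * (1 - p * (1 + a + a^2)) = 0 := by ring_nf; ring_nf at hc; linarith
    rcases mul_eq_zero.1 hfac with h | h
    · linarith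
    · linarith
  have h3 : p * (1 + abar p + (abar p)^2) = 1 := by
    have := abar_quad hp1 hp3; linarith
  have h4 : p * (a - abar p) * (1 + a + abar p) = 0 := by nlinarith
  have h5 : 0 < 1 + a + abar p := by
    have := abar_nonneg hp1 hp3; linarith
  have hp : (0:ℝ) < p := by linarith
  rcases mul_eq_zero.1 h4 with h | h
  · rcases mul_eq_zero.1 h with h | h
    · exfalso; linarith
    · linarith
  · linarith

/-- the final value of the limit -/
lemma final_value (hp1 : p ≤ 1) (hp3 : 1/3 < p) :
    p * SPL p 2 = (3*p - 2 + Real.sqrt (4*p - 3*p^2)) / 2 := by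
  have hp0 : (0:ℝ) ≤ p := by linarith
  have hp : (0:ℝ) < p := by linarith
  have h1 : SPL p 2 = 1 - (AL p 1)^2 := by
    have h := AL_pow hp0 hp1 2
    simp only [AL] at h ⊢; linarith
  rw [h1, AL_eq_abar hp1 hp3, abar]
  have h := sqrtD_sq hp0 hp1
  field_simp
  nlinarith [sqrtD_nonneg p, Real.sq_sqrt (show (0:ℝ) ≤ p * (4 - p * 3) by nlinarith), Real.sqrt_nonneg (p * (4 - p * 3))]

lemma final_value_zero (hp0 : 0 ≤ p) (hp3 : p ≤ 1/3) : p * SPL p 2 = 0 := by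
  have hp1 : p ≤ 1 := by linarith
  have h1 : AL p 1 = 1 := AL_one_of_le hp0 hp1 hp3
  have h2 : SPL p 2 = 1 - (AL p 1)^2 := by
    have h := AL_pow hp0 hp1 2
    simp only [AL] at h ⊢; linarith
  rw [h2, h1]; ring


/-- `alive b k m n`: the walk starting at level `k`, reading branch bits
`b m, b (m+1), …` (up 2 on `true`, down 1 on `false`) stays at level `≥ 1`
for `n` steps (level `0` is death, checked at every time including the start). -/
def alive (b : ℕ → Bool) : ℕ → ℕ → ℕ → Bool
  | 0, _, _ => false
  | _+1, _, 0 => true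
  | k+1, m, n+1 => alive b (if b m then k+3 else k) (m+1) n

@[simp] lemma alive_zero (b : ℕ → Bool) (m n : ℕ) : alive b 0 m n = false := by
  cases n <;> rfl
@[simp] lemma alive_succ_zero (b : ℕ → Bool) (k m : ℕ) : alive b (k+1) m 0 = true := rfl
lemma alive_succ_succ (b : ℕ → Bool) (k m n : ℕ) :
    alive b (k+1) m (n+1) = alive b (if b m then k+3 else k) (m+1) n := rfl

lemma alive_congr (b b' : ℕ → Bool) :
    ∀ n k m, (∀ i, m ≤ i → i < m + n → b i = b' i) → alive b k m n = alive b' k m n := by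
  intro n
  induction n with
  | zero => intro k m _; cases k <;> simp
  | succ n ih =>
    intro k m h
    cases k with
    | zero => simp
    | succ k =>
      rw [alive_succ_succ, alive_succ_succ, h m (le_refl m) (by omega),
        ih _ (m+1) (fun i h1 h2 => h i (by omega) (by omega))]

/-- the sum identity: summing the path weights over all branch words of length `n`
that keep the walk alive gives the survival probability. -/
lemma sum_alive (hp0 : 0 ≤ p) (hp1 : p ≤ 1) :
    ∀ n k m, ∑ t ∈ (Finset.Ico m (m+n)).powerset,
      (if alive (fun i => decide (i ∈ t)) k m n
        then ∏ i ∈ Finset.Ico m (m+n), (if i ∈ t then p else 1-p) else 0) = SP p k n := by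
  intro n
  induction n with
  | zero =>
    intro k m
    simp only [Nat.add_zero, Finset.Ico_self, Finset.powerset_empty,
      Finset.sum_singleton, Finset.prod_empty]
    cases k with
    | zero => simp
    | succ k => simp
  | succ n ih =>
    intro k m
    have hIco : Finset.Ico m (m+(n+1)) = insert m (Finset.Ico (m+1) (m+1+n)) := by
      ext x; simp [Finset.mem_Ico, Finset.mem_insert]; omega
    have hmem : m ∉ Finset.Ico (m+1) (m+1+n) := by simp
    rw [hIco, Finset.sum_powerset_insert hmem]
    cases k with
    | zero =>
      simp
    | succ k =>
      have hterm1 : ∀ t ∈ (Finset.Ico (m+1) (m+1+n)).powerset,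
          (if alive (fun i => decide (i ∈ t)) (k+1) m (n+1)
            then ∏ i ∈ insert m (Finset.Ico (m+1) (m+1+n)), (if i ∈ t then p else 1-p) else 0)
          = (1-p) * (if alive (fun i => decide (i ∈ t)) k (m+1) n
            then ∏ i ∈ Finset.Ico (m+1) (m+1+n), (if i ∈ t then p else 1-p) else 0) := by
        intro t ht
        have hmt : m ∉ t := fun hc => hmem (Finset.mem_powerset.1 ht hc)
        rw [alive_succ_succ]
        have hbm : (decide (m ∈ t)) = false := by simp [hmt]
        rw [hbm]
        simp only [Bool.false_eq_true, if_false]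
        rw [Finset.prod_insert hmem]
        simp only [hmt, if_false]
        split <;> ring
      have hterm2 : ∀ t ∈ (Finset.Ico (m+1) (m+1+n)).powerset,
          (if alive (fun i => decide (i ∈ insert m t)) (k+1) m (n+1)
            then ∏ i ∈ insert m (Finset.Ico (m+1) (m+1+n)),
              (if i ∈ insert m t then p else 1-p) else 0)
          = p * (if alive (fun i => decide (i ∈ t)) (k+3) (m+1) n
            then ∏ i ∈ Finset.Ico (m+1) (m+1+n), (if i ∈ t then p else 1-p) else 0) := by
        intro t ht
        have hsub := Finset.mem_powerset.1 ht
        rw [alive_succ_succ]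
        have hm : m ∈ insert m t := Finset.mem_insert_self m t
        have hbm : (decide (m ∈ insert m t)) = true := by simp
        rw [hbm]
        simp only [if_true]
        have hcong : alive (fun i => decide (i ∈ insert m t)) (k+3) (m+1) n
            = alive (fun i => decide (i ∈ t)) (k+3) (m+1) n := by
          apply alive_congr
          intro i h1 h2
          have : i ≠ m := by omega
          simp [Finset.mem_insert, this]
        rw [hcong, Finset.prod_insert hmem]
        simp only [hm, if_true]
        have hprod : ∏ i ∈ Finset.Ico (m+1) (m+1+n), (if i ∈ insert m t then p else 1-p)
            = ∏ i ∈ Finset.Ico (m+1) (m+1+n), (if i ∈ t then p else 1-p) := by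
          apply Finset.prod_congr rfl
          intro i hi
          have : i ≠ m := by simp [Finset.mem_Ico] at hi; omega
          simp [Finset.mem_insert, this]
        rw [hprod]
        split <;> ring
      rw [Finset.sum_congr rfl hterm1, Finset.sum_congr rfl hterm2,
        ← Finset.mul_sum, ← Finset.mul_sum, ih k (m+1), ih (k+3) (m+1),
        SP_succ_succ]
      ring


/-- the level walk read off from the branch word (coordinates from `2` on) -/
def dwalk (w : ℕ → Bool) : ℕ → ℕ
  | 0 => 2
  | j+1 => if w (j+2) then dwalk w j + 2 else dwalk w j - 1

@[simp] lemma dwalk_zero (w : ℕ → Bool) : dwalk w 0 = 2 := rfl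
lemma dwalk_succ (w : ℕ → Bool) (j : ℕ) :
    dwalk w (j+1) = if w (j+2) then dwalk w j + 2 else dwalk w j - 1 := rfl

lemma alive_iff_dwalk (w : ℕ → Bool) :
    ∀ n j, alive w (dwalk w j) (j+2) n = true ↔
      ∀ i, j ≤ i → i ≤ j + n → 1 ≤ dwalk w i := by
  intro n
  induction n with
  | zero =>
    intro j
    cases hd : dwalk w j with
    | zero =>
      simp only [alive_zero]
      constructor
      · intro h; exact absurd h (by simp)
      · intro h; exfalso; have := h j le_rfl (by omega); omega
    | succ k =>
      simp only [alive_succ_zero, true_iff]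
      intro i h1 h2
      have : i = j := by omega
      subst this; omega
  | succ n ih =>
    intro j
    cases hd : dwalk w j with
    | zero =>
      simp only [alive_zero]
      constructor
      · intro h; exact absurd h (by simp)
      · intro h; exfalso; have := h j le_rfl (by omega); omega
    | succ k =>
      have hstep : alive w (k+1) (j+2) (n+1)
          = alive w (dwalk w (j+1)) (j+3) n := by
        rw [alive_succ_succ, dwalk_succ, hd]
        cases hb : w (j+2) with
        | false => simp only [Bool.false_eq_true, if_false]; norm_num
        | true => simp only [if_true]
      rw [hstep]
      have hj3 : j + 1 + 2 = j + 3 := by omega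
      rw [← hj3, ih (j+1)]
      constructor
      · intro h i h1 h2
        by_cases hij : i = j
        · subst hij; omega
        · exact h i (by omega) (by omega)
      · intro h i h1 h2
        exact h i (by omega) (by omega)

/-- the basic map: a left branch sends the pair `(x, y)` to `(y, |x - y|)`. -/
def tmap : ℤ × ℤ → ℤ × ℤ := fun s => (s.2, |s.1 - s.2|)

/-- `e` is the exact number of `tmap` iterations needed to reach `(1,1)` -/
def MI (s : ℤ × ℤ) (e : ℕ) : Prop :=
  tmap^[e] s = (1, 1) ∧ ∀ m, m < e → tmap^[m] s ≠ (1, 1)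

lemma fibG_step (w : ℕ → Bool) (j : ℕ) :
    fibG w (j+2) = if w (j+1) then fibG w j + fibG w (j+1)
      else |fibG w j - fibG w (j+1)| := rfl

lemma key_inv (w : ℕ → Bool) (hw : w 1 = true) :
    ∀ j, (∀ i, 1 ≤ i → i ≤ j → (fibG w i, fibG w (i+1)) ≠ (1, 1)) →
    0 ≤ fibG w (j+1) ∧ 0 ≤ fibG w (j+2) ∧
    (fibG w (j+1), fibG w (j+2)) ≠ (1, 0) ∧ (fibG w (j+1), fibG w (j+2)) ≠ (0, 1) ∧
    MI (fibG w (j+1), fibG w (j+2)) (dwalk w j) := by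
  intro j
  induction j with
  | zero =>
    intro _
    have h1 : fibG w 1 = 1 := rfl
    have h2 : fibG w 2 = 2 := by rw [fibG_step w 0, hw]; norm_num [fibG]
    rw [h1, h2]
    refine ⟨by norm_num, by norm_num, by norm_num, by norm_num, ?_, ?_⟩
    · show tmap^[2] (1, 2) = (1, 1)
      have : tmap (1, 2) = (2, 1) := by simp [tmap]
      rw [Function.iterate_succ_apply, this, Function.iterate_one]
      simp [tmap]
    · intro m hm
      have hm2 : m < 2 := by simpa using hm
      interval_cases m
      · simp
      · rw [Function.iterate_one]; simp [tmap]
  | succ j ihj =>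
    intro h
    show 0 ≤ fibG w (j+2) ∧ 0 ≤ fibG w (j+3) ∧
      (fibG w (j+2), fibG w (j+3)) ≠ (1, 0) ∧ (fibG w (j+2), fibG w (j+3)) ≠ (0, 1) ∧
      MI (fibG w (j+2), fibG w (j+3)) (dwalk w (j+1))
    obtain ⟨hx, hy, hne10, hne01, hMI⟩ := ihj (fun i h1 h2 => h i h1 (by omega))
    set x := fibG w (j+1) with hxdef
    set y := fibG w (j+2) with hydef
    set e := dwalk w j with hedef
    have hpair_ne : (x, y) ≠ ((1 : ℤ), (1 : ℤ)) := h (j+1) (by omega) le_rfl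
    have he1 : 1 ≤ e := by
      rcases Nat.eq_zero_or_pos e with h0 | h1
      · exfalso; apply hpair_ne; have := hMI.1; rw [h0] at this; simpa using this
      · exact h1
    have hstep3 : fibG w (j+3) = if w (j+2) then x + y else |x - y| := fibG_step w (j+1)
    cases hb : w (j+2) with
    | true =>
      have hnew : fibG w (j+3) = x + y := by rw [hstep3, hb]; simp
      have hd : dwalk w (j+1) = e + 2 := by rw [dwalk_succ, hb]; simp [hedef]
      rw [hnew, hd]
      have ht1 : tmap (y, x + y) = (x + y, x) := by
        simp only [tmap]
        have : y - (x + y) = -x := by ring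
        rw [this, abs_neg, abs_of_nonneg hx]
      have ht2 : tmap (x + y, x) = (x, y) := by
        simp only [tmap]
        have : x + y - x = y := by ring
        rw [this, abs_of_nonneg hy]
      have hit2 : tmap^[2] (y, x + y) = (x, y) := by
        rw [Function.iterate_succ_apply, ht1, Function.iterate_one, ht2]
      refine ⟨hy, by linarith, ?_, ?_, ?_, ?_⟩
      · intro hc
        have h1 : y = 1 := (Prod.mk.injEq _ _ _ _ ▸ hc).1
        have h2 : x + y = 0 := (Prod.mk.injEq _ _ _ _ ▸ hc).2
        omega
      · intro hc
        have h1 : y = 0 := (Prod.mk.injEq _ _ _ _ ▸ hc).1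
        have h2 : x + y = 1 := (Prod.mk.injEq _ _ _ _ ▸ hc).2
        exact hne10 (by simp only [Prod.mk.injEq]; omega)
      · show tmap^[e+2] (y, x + y) = (1, 1)
        rw [Function.iterate_add_apply, hit2]
        exact hMI.1
      · intro m hm
        match m with
        | 0 =>
          intro hc
          simp only [Function.iterate_zero, id] at hc
          have h1 : y = 1 := (Prod.mk.injEq _ _ _ _ ▸ hc).1
          have h2 : x + y = 1 := (Prod.mk.injEq _ _ _ _ ▸ hc).2
          exact hne01 (by simp only [Prod.mk.injEq]; omega)
        | 1 =>
          intro hc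
          rw [Function.iterate_one, ht1] at hc
          have h1 : x + y = 1 := (Prod.mk.injEq _ _ _ _ ▸ hc).1
          have h2 : x = 1 := (Prod.mk.injEq _ _ _ _ ▸ hc).2
          exact hne10 (by simp only [Prod.mk.injEq]; omega)
        | (m'+2) =>
          intro hc
          rw [show m' + 2 = m' + 2 from rfl, Function.iterate_add_apply, hit2] at hc
          exact hMI.2 m' (by omega) hc
    | false =>
      have hnew : fibG w (j+3) = |x - y| := by
        rw [hstep3, hb]; simp
      have hd : dwalk w (j+1) = e - 1 := by
        rw [dwalk_succ, hb]; simp [hedef]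
      obtain ⟨e', he'⟩ : ∃ e', e = e' + 1 := ⟨e - 1, by omega⟩
      rw [hnew, hd, he']
      have htm : tmap (x, y) = (y, |x - y|) := rfl
      refine ⟨hy, abs_nonneg _, ?_, ?_, ?_, ?_⟩
      · intro hc
        have h1 : y = 1 := (Prod.mk.injEq _ _ _ _ ▸ hc).1
        have h2 : |x - y| = 0 := (Prod.mk.injEq _ _ _ _ ▸ hc).2
        have : x = y := by rw [abs_eq_zero] at h2; linarith
        exact hpair_ne (by simp only [Prod.mk.injEq]; omega)
      · intro hc
        have h1 : y = 0 := (Prod.mk.injEq _ _ _ _ ▸ hc).1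
        have h2 : |x - y| = 1 := (Prod.mk.injEq _ _ _ _ ▸ hc).2
        rw [h1, sub_zero, abs_of_nonneg hx] at h2
        exact hne10 (by simp only [Prod.mk.injEq]; omega)
      · show tmap^[e'+1-1] (y, |x - y|) = (1, 1)
        have he2 : e' + 1 - 1 = e' := by omega
        rw [he2, ← htm, ← Function.iterate_succ_apply]
        rw [he'] at hMI
        exact hMI.1
      · intro m hm
        intro hc
        rw [← htm, ← Function.iterate_succ_apply] at hc
        exact hMI.2 (m+1) (by omega) hc

lemma event_eq :
    {w : ℕ → Bool | ∀ i, 1 ≤ i → (fibG w i, fibG w (i + 1)) ≠ (1, 1)}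
      = {w : ℕ → Bool | w 1 = true ∧ ∀ j, 1 ≤ dwalk w j} := by
  ext w
  simp only [Set.mem_setOf_eq]
  constructor
  · intro h
    have hw : w 1 = true := by
      by_contra hw
      have hw' : w 1 = false := by revert hw; cases w 1 <;> simp
      have h2 : fibG w 2 = 0 := by rw [fibG_step w 0, hw']; norm_num [fibG]
      have h3 : fibG w 3 = 1 := by
        rw [fibG_step w 1, h2]
        have h1 : fibG w 1 = 1 := rfl
        rw [h1]; cases w 2 <;> simp
      have h4 : fibG w 4 = 1 := by
        rw [fibG_step w 2, h2, h3]; cases w 3 <;> simp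
      exact h 3 (by omega) (by rw [h3, h4])
    refine ⟨hw, fun j => ?_⟩
    obtain ⟨_, _, _, _, hMI⟩ := key_inv w hw j (fun i h1 _ => h i h1)
    rcases Nat.eq_zero_or_pos (dwalk w j) with h0 | h1
    · exfalso
      have := hMI.1
      rw [h0] at this
      simp only [Function.iterate_zero, id] at this
      exact h (j+1) (by omega) this
    · exact h1
  · rintro ⟨hw, hd⟩
    have key : ∀ j, ∀ i, 1 ≤ i → i ≤ j → (fibG w i, fibG w (i+1)) ≠ (1, 1) := by
      intro j
      induction j with
      | zero => intro i h1 h2; omega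
      | succ j ihj =>
        intro i h1 h2
        rcases Nat.lt_or_ge i (j+1) with hlt | hge
        · exact ihj i h1 (by omega)
        · have hi : i = j + 1 := by omega
          subst hi
          obtain ⟨_, _, _, _, hMI⟩ := key_inv w hw j ihj
          have := hMI.2 0 (by have := hd j; omega)
          simpa using this
    intro i h1
    exact key i i h1 le_rfl

open MeasureTheory

attribute [local instance] Classical.propDecidable

lemma cyl_measurable (s : Finset ℕ) (b : ℕ → Bool) :
    MeasurableSet {w : ℕ → Bool | ∀ i ∈ s, w i = b i} := by
  have he : {w : ℕ → Bool | ∀ i ∈ s, w i = b i}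
      = ⋂ i ∈ s, {w : ℕ → Bool | w i = b i} := by
    ext w; simp
  rw [he]
  refine MeasurableSet.biInter s.countable_toSet (fun i _ => ?_)
  have h1 : Measurable (fun w : ℕ → Bool => w i) := measurable_pi_apply i
  exact h1 (MeasurableSet.singleton (b i))

lemma A_eq_union (s : Finset ℕ) (A : Set (ℕ → Bool))
    (hdet : ∀ w w' : ℕ → Bool, (∀ i ∈ s, w i = w' i) → w ∈ A → w' ∈ A) :
    A = ⋃ t ∈ s.powerset.filter (fun t => (fun i => decide (i ∈ t)) ∈ A),
      {w : ℕ → Bool | ∀ i ∈ s, w i = decide (i ∈ t)} := by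
  ext w
  constructor
  · intro hw
    have hagree : ∀ i ∈ s, w i = decide (i ∈ s.filter (fun i => w i = true)) := by
      intro i hi
      simp only [Finset.mem_filter, hi, true_and]
      cases hwi : w i <;> simp
    exact Set.mem_biUnion (Finset.mem_filter.2
      ⟨Finset.mem_powerset.2 (Finset.filter_subset _ _), hdet w _ hagree hw⟩) hagree
  · intro hw
    rw [Set.mem_iUnion₂] at hw
    obtain ⟨t, ht, hag⟩ := hw
    simp only [Finset.mem_filter] at ht
    exact hdet _ w (fun i hi => (hag i hi).symm) ht.2

lemma measure_determined {p : ℝ} (μ : Measure (ℕ → Bool)) [IsProbabilityMeasure μ]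
    (hμ : ∀ (s : Finset ℕ) (b : ℕ → Bool),
      μ {w : ℕ → Bool | ∀ i ∈ s, w i = b i}
        = ∏ i ∈ s, ENNReal.ofReal (if b i then p else 1 - p))
    (s : Finset ℕ) (A : Set (ℕ → Bool))
    (hdet : ∀ w w' : ℕ → Bool, (∀ i ∈ s, w i = w' i) → w ∈ A → w' ∈ A) :
    μ A = ∑ t ∈ s.powerset, (if (fun i => decide (i ∈ t)) ∈ A
      then ∏ i ∈ s, ENNReal.ofReal (if i ∈ t then p else 1 - p) else 0) := by
  conv_lhs => rw [A_eq_union s A hdet]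
  rw [measure_biUnion_finset ?hd (fun t _ => cyl_measurable s _)]
  case hd =>
    intro t ht t' ht' hne
    simp only [Finset.coe_filter, Set.mem_setOf_eq] at ht ht'
    refine Set.disjoint_left.2 (fun w hw hw' => ?_)
    apply hne
    have hts : t ⊆ s := Finset.mem_powerset.1 ht.1
    have hts' : t' ⊆ s := Finset.mem_powerset.1 ht'.1
    apply Finset.ext
    intro i
    constructor
    · intro hit
      have his : i ∈ s := hts hit
      have h1 := hw i his
      have h2 := hw' i his
      rw [h1] at h2
      simpa [hit] using h2.symm
    · intro hit
      have his : i ∈ s := hts' hit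
      have h1 := hw i his
      have h2 := hw' i his
      rw [h2] at h1
      simpa [hit] using h1
  rw [Finset.sum_filter]
  apply Finset.sum_congr rfl
  intro t _
  split
  · rw [hμ s (fun i => decide (i ∈ t))]
    refine Finset.prod_congr rfl (fun i _ => ?_)
    by_cases h : i ∈ t <;> simp [h]
  · rfl

/-- the finite-horizon events -/
def Bset (n : ℕ) : Set (ℕ → Bool) := {w | w 1 = true ∧ ∀ j, j ≤ n → 1 ≤ dwalk w j}

lemma dwalk_congr (w w' : ℕ → Bool) :
    ∀ j, (∀ i, 2 ≤ i → i ≤ j + 1 → w i = w' i) → dwalk w j = dwalk w' j := by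
  intro j
  induction j with
  | zero => intro _; rfl
  | succ j ih =>
    intro h
    rw [dwalk_succ, dwalk_succ, h (j+2) (by omega) (by omega),
      ih (fun i h1 h2 => h i h1 (by omega))]

lemma Bset_det (n : ℕ) (w w' : ℕ → Bool)
    (hag : ∀ i ∈ Finset.Icc 1 (n+1), w i = w' i) (hw : w ∈ Bset n) : w' ∈ Bset n := by
  obtain ⟨h1, h2⟩ := hw
  constructor
  · rw [← hag 1 (by simp)]; exact h1
  · intro j hj
    rw [← dwalk_congr w w' j (fun i hi1 hi2 => hag i (by simp; omega))]
    exact h2 j hj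

lemma Bset_mem_iff (n : ℕ) (b : ℕ → Bool) :
    b ∈ Bset n ↔ (b 1 = true ∧ alive b 2 2 n = true) := by
  have h := alive_iff_dwalk b n 0
  try simp only [Nat.zero_add] at h
  constructor
  · rintro ⟨h1, h2⟩
    exact ⟨h1, by rw [show (2:ℕ) = dwalk b 0 from rfl]; exact h.2 (fun i _ hi => h2 i hi)⟩
  · rintro ⟨h1, h2⟩
    refine ⟨h1, fun j hj => ?_⟩
    rw [show (2:ℕ) = dwalk b 0 from rfl] at h2
    exact h.1 h2 j (by omega) (by omega)

lemma measure_Bset {p : ℝ} (hp0 : 0 ≤ p) (hp1 : p ≤ 1)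
    (μ : Measure (ℕ → Bool)) [IsProbabilityMeasure μ]
    (hμ : ∀ (s : Finset ℕ) (b : ℕ → Bool),
      μ {w : ℕ → Bool | ∀ i ∈ s, w i = b i}
        = ∏ i ∈ s, ENNReal.ofReal (if b i then p else 1 - p)) (n : ℕ) :
    μ (Bset n) = ENNReal.ofReal (p * SP p 2 n) := by
  rw [measure_determined μ hμ (Finset.Icc 1 (n+1)) (Bset n) (Bset_det n)]
  -- turn into ofReal of a real sum
  have hterm : ∀ t ∈ (Finset.Icc 1 (n+1)).powerset,
      (if (fun i => decide (i ∈ t)) ∈ Bset n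
        then ∏ i ∈ Finset.Icc 1 (n+1), ENNReal.ofReal (if i ∈ t then p else 1 - p) else 0)
      = ENNReal.ofReal (if (fun i => decide (i ∈ t)) ∈ Bset n
        then ∏ i ∈ Finset.Icc 1 (n+1), (if i ∈ t then p else 1 - p) else 0) := by
    intro t _
    split
    · rw [ENNReal.ofReal_prod_of_nonneg]
      intro i _
      split <;> linarith
    · rw [ENNReal.ofReal_zero]
  rw [Finset.sum_congr rfl hterm, ← ENNReal.ofReal_sum_of_nonneg]
  · congr 1
    -- the real sum identity
    have hIcc : Finset.Icc 1 (n+1) = insert 1 (Finset.Ico 2 (2+n)) := by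
      ext x; simp [Finset.mem_Icc, Finset.mem_Ico, Finset.mem_insert]; omega
    have hmem : (1:ℕ) ∉ Finset.Ico 2 (2+n) := by simp
    rw [hIcc, Finset.sum_powerset_insert hmem]
    have hzero : ∀ t ∈ (Finset.Ico 2 (2+n)).powerset,
        (if (fun i => decide (i ∈ t)) ∈ Bset n
          then ∏ i ∈ insert 1 (Finset.Ico 2 (2+n)), (if i ∈ t then p else 1 - p) else 0) = 0 := by
      intro t ht
      have h1t : (1:ℕ) ∉ t := fun hc => hmem (Finset.mem_powerset.1 ht hc)
      have hnc : ¬((fun i => decide (i ∈ t)) ∈ Bset n) := by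
        rw [Bset_mem_iff]
        simp [h1t]
      rw [if_neg hnc]
    have hmain : ∀ t ∈ (Finset.Ico 2 (2+n)).powerset,
        (if (fun i => decide (i ∈ insert 1 t)) ∈ Bset n
          then ∏ i ∈ insert 1 (Finset.Ico 2 (2+n)), (if i ∈ insert 1 t then p else 1 - p) else 0)
        = p * (if alive (fun i => decide (i ∈ t)) 2 2 n
          then ∏ i ∈ Finset.Ico 2 (2+n), (if i ∈ t then p else 1 - p) else 0) := by
      intro t ht
      have hcond : ((fun i => decide (i ∈ insert 1 t)) ∈ Bset n)
          ↔ (alive (fun i => decide (i ∈ t)) 2 2 n = true) := by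
        have h2 : alive (fun i => decide (i ∈ insert 1 t)) 2 2 n
            = alive (fun i => decide (i ∈ t)) 2 2 n := by
          apply alive_congr
          intro i hi1 hi2
          have : i ≠ 1 := by omega
          simp [Finset.mem_insert, this]
        rw [Bset_mem_iff]
        constructor
        · rintro ⟨_, ha⟩; rwa [h2] at ha
        · intro ha; exact ⟨by simp, by rwa [h2]⟩
      rw [Finset.prod_insert hmem]
      have hp1mem : ((1:ℕ) ∈ insert 1 t) := Finset.mem_insert_self 1 t
      rw [if_pos hp1mem]
      have hprod : ∏ i ∈ Finset.Ico 2 (2+n), (if i ∈ insert 1 t then p else 1 - p)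
          = ∏ i ∈ Finset.Ico 2 (2+n), (if i ∈ t then p else 1 - p) := by
        apply Finset.prod_congr rfl
        intro i hi
        have : i ≠ 1 := by simp [Finset.mem_Ico] at hi; omega
        simp [Finset.mem_insert, this]
      rw [hprod]
      by_cases hc : alive (fun i => decide (i ∈ t)) 2 2 n = true
      · rw [if_pos (hcond.2 hc), if_pos hc]
      · rw [if_neg (fun hh => hc (hcond.1 hh)), if_neg hc, mul_zero]
    rw [Finset.sum_congr rfl hzero, Finset.sum_congr rfl hmain, Finset.sum_const_zero,
      zero_add, ← Finset.mul_sum, sum_alive hp0 hp1 n 2 2]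
  · intro t _
    split
    · apply Finset.prod_nonneg
      intro i _
      split <;> linarith
    · rfl

lemma Bset_measurable (n : ℕ) : MeasurableSet (Bset n) := by
  rw [A_eq_union (Finset.Icc 1 (n+1)) (Bset n) (Bset_det n)]
  exact (Finset.measurableSet_biUnion _ (fun t _ => cyl_measurable _ _))

lemma Bset_antitone : Antitone Bset := by
  intro m n hmn w hw
  exact ⟨hw.1, fun j hj => hw.2 j (by omega)⟩

lemma Bset_iInter :
    (⋂ n, Bset n) = {w : ℕ → Bool | w 1 = true ∧ ∀ j, 1 ≤ dwalk w j} := by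
  ext w
  simp only [Set.mem_iInter, Bset, Set.mem_setOf_eq]
  constructor
  · intro h
    exact ⟨(h 0).1, fun j => (h j).2 j le_rfl⟩
  · intro h n
    exact ⟨h.1, fun j _ => h.2 j⟩

end AO


/-- For `0 ≤ p ≤ 1`, equip `ℕ → Bool` with the product probability measure `μ`
in which each coordinate is independently `right` (= `true`) with probability
`p` and `left` (= `false`) with probability `1 - p` (characterised by its
values on cylinder sets).  Then the measure of the set of branch sequences
whose walk satisfies `(g_i, g_{i+1}) ≠ (1,1)` for all `i ≥ 1` is `0` if
`p ≤ 1/3` and `(3p - 2 + √(4p - 3p²))/2` if `p > 1/3`. -/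
theorem measure_avoiding_one_one (p : ℝ) (hp0 : 0 ≤ p) (hp1 : p ≤ 1)
    (μ : Measure (ℕ → Bool)) [IsProbabilityMeasure μ]
    (hμ : ∀ (s : Finset ℕ) (b : ℕ → Bool),
      μ {w : ℕ → Bool | ∀ i ∈ s, w i = b i}
        = ∏ i ∈ s, ENNReal.ofReal (if b i then p else 1 - p)) :
    μ {w : ℕ → Bool | ∀ i, 1 ≤ i → (fibG w i, fibG w (i + 1)) ≠ (1, 1)}
      = if p ≤ 1 / 3 then 0
        else ENNReal.ofReal ((3 * p - 2 + Real.sqrt (4 * p - 3 * p ^ 2)) / 2) := by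
  rw [AO.event_eq, ← AO.Bset_iInter]
  have hmono : Antitone AO.Bset := AO.Bset_antitone
  have ht1 : Filter.Tendsto (fun n => μ (AO.Bset n)) Filter.atTop
      (nhds (μ (⋂ n, AO.Bset n))) :=
    tendsto_measure_iInter_atTop (fun n => (AO.Bset_measurable n).nullMeasurableSet) hmono
      ⟨0, measure_ne_top μ _⟩
  have heq : ∀ n, μ (AO.Bset n) = ENNReal.ofReal (p * AO.SP p 2 n) :=
    AO.measure_Bset hp0 hp1 μ hμ
  have ht2 : Filter.Tendsto (fun n => μ (AO.Bset n)) Filter.atTop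
      (nhds (ENNReal.ofReal (p * AO.SPL p 2))) := by
    simp only [heq]
    exact ENNReal.tendsto_ofReal (Filter.Tendsto.mul tendsto_const_nhds
      (AO.SP_tendsto hp0 hp1 2))
  have hval : μ (⋂ n, AO.Bset n) = ENNReal.ofReal (p * AO.SPL p 2) :=
    tendsto_nhds_unique ht1 ht2
  rw [hval]
  by_cases hc : p ≤ 1/3
  · rw [if_pos hc, AO.final_value_zero hp0 hc, ENNReal.ofReal_zero]
  · rw [if_neg hc, AO.final_value hp1 (lt_of_not_ge hc)]
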